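/- arXiv:1502.07899 — 2 statements merged into one kernel-verified Lean document; each statement's English description precedes it below -/
import Mathlib

section
/- Let $x_1, x_2 : [0,T] \to \mathbb{R}$ be differentiable functions satisfying $\dot{x}_1(t) \le a_{11} x_1(t) + a_{12} x_2(t)$ and $\dot{x}_2(t) \le \frac{a_{21}}{\epsilon} x_1(t) - \frac{a_{22}}{\epsilon} x_2(t)$ with $x_1(0) = 0$, $x_2(0) = 1$, where $a_{ij} > 0$ and $0 < \epsilon$, and assume $x_1(t) \ge 0$ for all $t \in [0,T]$. Then there exists a constant $C > 0$ depending only on the $a_{ij}$ and $T$ (not on $\epsilon$) such that $\max_{0 \le s \le T} x_1(s) \le C\epsilon$ and $x_2(t) \le e^{-a_{22} t/\epsilon} + C\epsilon$ for all $t \in [0,T]$. -/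
/-!
The pair `(x₁, x₂)` is a subsolution of the linear system `y' = M y` with
`M = [[a₁₁, a₁₂], [a₂₁/ε, -a₂₂/ε]]`, which is cooperative: its off-diagonal entries are
nonnegative. For such systems a strict supersolution starting above the data stays above every
subsolution: wherever a component of the nonnegative difference vanishes, cooperativity forces
its derivative to be positive. With `A = a₁₂/a₂₂`, `B = a₁₂a₂₁/a₂₂²` and
`λ = a₁₁ + a₁₂a₂₁/a₂₂`, the pair `y₁ = Aε (e^{λt} - e^{-a₂₂t/ε})`, `y₂ = e^{-a₂₂t/ε} + Bε e^{λt}`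
is such a strict supersolution: the choice of `A` balances the boundary-layer terms in the first
equation, that of `B` and `λ` the slowly growing terms. Apart from the boundary layer
`e^{-a₂₂t/ε}`, it is bounded by `(A + B) e^{λT} ε` on `[0, T]`.
-/

open Set Filter Topology Matrix Real

theorem HasDerivWithinAt.eventually_nhdsGT_lt {f : ℝ → ℝ} {f' x : ℝ}
    (hf : HasDerivWithinAt f f' (Ici x) x) (hf' : 0 < f') : ∀ᶠ z in 𝓝[>] x, f x < f z := by
  have hslope := (hasDerivWithinAt_iff_tendsto_slope' (lt_irrefl x)).1 hf.Ioi_of_Ici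
  filter_upwards [hslope.eventually (eventually_gt_nhds hf'), self_mem_nhdsWithin] with z hz hxz
  exact (slope_pos_iff_of_le (le_of_lt hxz)).1 hz

theorem nonneg_of_deriv_pos_of_eq_zero {ι : Type*} [Finite ι] {g g' : ℝ → ι → ℝ} {a b : ℝ}
    (hg : ContinuousOn g (Icc a b))
    (hg' : ∀ t ∈ Ico a b, HasDerivWithinAt g (g' t) (Ici t) t)
    (hpos : ∀ t ∈ Ico a b, 0 ≤ g t → ∀ i, g t i = 0 → 0 < g' t i)
    (ha : 0 ≤ g a) : ∀ t ∈ Icc a b, 0 ≤ g t := by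
  have hclosed : IsClosed ({t | 0 ≤ g t} ∩ Icc a b) := by
    rw [inter_comm]
    exact hg.preimage_isClosed_of_isClosed isClosed_Icc isClosed_Ici
  refine fun t ht => hclosed.Icc_subset_of_forall_mem_nhdsWithin ha ?_ ht
  rintro x ⟨hx0 : 0 ≤ g x, hx⟩
  simp only [Pi.le_def, ofPred_forall]
  refine iInter_mem.2 fun i => ?_
  have hgi : HasDerivWithinAt (g · i) (g' x i) (Ici x) x := hasDerivWithinAt_pi.1 (hg' x hx) i
  rcases (hx0 i).eq_or_lt with hzero | hpos'
  · filter_upwards [hgi.eventually_nhdsGT_lt (hpos x hx hx0 i hzero.symm)] with z hz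
    exact hzero.trans_le hz.le
  · filter_upwards [(hgi.continuousWithinAt.mono Ioi_subset_Ici_self).eventually
      (eventually_gt_nhds hpos')] with z hz
    exact hz.le

theorem le_of_deriv_le_mulVec_of_mulVec_lt_deriv {ι : Type*} [Fintype ι] {M : Matrix ι ι ℝ}
    (hM : ∀ i j, i ≠ j → 0 ≤ M i j) {x x' y y' : ℝ → ι → ℝ} {a b : ℝ}
    (hx : ContinuousOn x (Icc a b)) (hy : ContinuousOn y (Icc a b))
    (hx' : ∀ t ∈ Ico a b, HasDerivWithinAt x (x' t) (Ici t) t)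
    (hy' : ∀ t ∈ Ico a b, HasDerivWithinAt y (y' t) (Ici t) t)
    (hxM : ∀ t ∈ Ico a b, x' t ≤ M *ᵥ x t) (hyM : ∀ t ∈ Ico a b, ∀ i, (M *ᵥ y t) i < y' t i)
    (ha : x a ≤ y a) : ∀ t ∈ Icc a b, x t ≤ y t := by
  have hpos : ∀ t ∈ Ico a b, 0 ≤ y t - x t → ∀ i, (y t - x t) i = 0 → 0 < (y' t - x' t) i := by
    intro t ht hnonneg i hi
    have hMnonneg : 0 ≤ (M *ᵥ (y t - x t)) i := by
      refine Finset.sum_nonneg fun j _ => ?_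
      rcases eq_or_ne i j with rfl | hij
      · simp [hi]
      · exact mul_nonneg (hM i j hij) (hnonneg j)
    have := hxM t ht i
    have := hyM t ht i
    simp only [mulVec_sub, Pi.sub_apply] at hMnonneg ⊢
    linarith
  intro t ht
  exact sub_nonneg.1 <| nonneg_of_deriv_pos_of_eq_zero (hy.sub hx)
    (fun t ht => (hy' t ht).sub (hx' t ht)) hpos (sub_nonneg.2 ha) t ht

noncomputable section

namespace SlowFast

variable (a11 a12 a21 a22 ε : ℝ)

def matrix : Matrix (Fin 2) (Fin 2) ℝ := !![a11, a12; a21 / ε, -(a22 / ε)]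

def rate : ℝ := a11 + a12 * a21 / a22

def supersolution (t : ℝ) : Fin 2 → ℝ :=
  ![a12 / a22 * ε * (exp (rate a11 a12 a21 a22 * t) - exp (-(a22 * t) / ε)),
    exp (-(a22 * t) / ε) + a12 * a21 / a22 ^ 2 * ε * exp (rate a11 a12 a21 a22 * t)]

def supersolutionDeriv (t : ℝ) : Fin 2 → ℝ :=
  ![a12 / a22 * ε * rate a11 a12 a21 a22 * exp (rate a11 a12 a21 a22 * t)
      + a12 * exp (-(a22 * t) / ε),
    -(a22 / ε) * exp (-(a22 * t) / ε)
      + a12 * a21 / a22 ^ 2 * ε * rate a11 a12 a21 a22 * exp (rate a11 a12 a21 a22 * t)]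

def bound (T : ℝ) : ℝ := (a12 / a22 + a12 * a21 / a22 ^ 2) * exp (rate a11 a12 a21 a22 * T)

variable {a11 a12 a21 a22 ε}

lemma rate_pos (h11 : 0 < a11) (h12 : 0 < a12) (h21 : 0 < a21) (h22 : 0 < a22) :
    0 < rate a11 a12 a21 a22 := by
  unfold rate
  positivity

lemma bound_pos (h12 : 0 < a12) (h21 : 0 < a21) (h22 : 0 < a22) (T : ℝ) :
    0 < bound a11 a12 a21 a22 T := by
  unfold bound
  positivity

lemma matrix_nonneg_of_ne (h12 : 0 < a12) (h21 : 0 < a21) (hε : 0 < ε) :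
    ∀ i j, i ≠ j → 0 ≤ matrix a11 a12 a21 a22 ε i j := by
  simp [Fin.forall_fin_two, matrix, h12.le, div_nonneg h21.le hε.le]

lemma matrix_mulVec (u v : ℝ) :
    matrix a11 a12 a21 a22 ε *ᵥ ![u, v] = ![a11 * u + a12 * v, a21 / ε * u - a22 / ε * v] := by
  ext i
  fin_cases i <;> simp [matrix, mulVec, dotProduct, mul_comm, sub_eq_add_neg]

lemma hasDerivAt_supersolution (h22 : a22 ≠ 0) (hε : ε ≠ 0) (t : ℝ) :
    HasDerivAt (supersolution a11 a12 a21 a22 ε) (supersolutionDeriv a11 a12 a21 a22 ε t) t := by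
  have hF : HasDerivAt (fun s => exp (rate a11 a12 a21 a22 * s))
      (rate a11 a12 a21 a22 * exp (rate a11 a12 a21 a22 * t)) t :=
    (((hasDerivAt_id' t).const_mul _).exp).congr_deriv (by ring)
  have hE : HasDerivAt (fun s => exp (-(a22 * s) / ε)) (-(a22 / ε) * exp (-(a22 * t) / ε)) t :=
    ((((hasDerivAt_id' t).const_mul a22).neg.div_const ε).exp).congr_deriv
      (by simp only [Pi.neg_apply]; ring)
  refine hasDerivAt_pi.2 (Fin.forall_fin_two.2 ⟨?_, ?_⟩)
  · refine ((hF.sub hE).const_mul (a12 / a22 * ε)).congr_deriv ?_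
    simp only [supersolutionDeriv, cons_val_zero]
    field_simp
    ring
  · refine (hE.add (hF.const_mul (a12 * a21 / a22 ^ 2 * ε))).congr_deriv ?_
    simp only [supersolutionDeriv, cons_val_one, cons_val_zero]
    ring

lemma mulVec_supersolution_lt_deriv (h11 : 0 < a11) (h12 : 0 < a12) (h21 : 0 < a21)
    (h22 : 0 < a22) (hε : 0 < ε) (t : ℝ) :
    ∀ i, (matrix a11 a12 a21 a22 ε *ᵥ supersolution a11 a12 a21 a22 ε t) i <
      supersolutionDeriv a11 a12 a21 a22 ε t i := by
  have := rate_pos h11 h12 h21 h22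
  simp only [supersolution, matrix_mulVec, supersolutionDeriv, Fin.forall_fin_two,
    cons_val_zero, cons_val_one]
  constructor
  · rw [← sub_pos]
    convert (by positivity : 0 < a11 * (a12 / a22) * ε * exp (-(a22 * t) / ε)) using 1
    unfold rate
    field_simp
    ring
  · rw [← sub_pos]
    convert (by positivity : 0 < a12 * a21 / a22 ^ 2 * ε * rate a11 a12 a21 a22 *
      exp (rate a11 a12 a21 a22 * t) + a21 * (a12 / a22) * exp (-(a22 * t) / ε)) using 1
    field_simp
    ring

lemma initial_le_supersolution (h12 : 0 < a12) (h21 : 0 < a21) (hε : 0 < ε) :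
    ![0, 1] ≤ supersolution a11 a12 a21 a22 ε 0 := by
  have hB : 0 ≤ a12 * a21 / a22 ^ 2 * ε := by positivity
  refine Fin.forall_fin_two.2 ⟨?_, ?_⟩ <;> simp [supersolution, hB]

lemma supersolution_le (h11 : 0 < a11) (h12 : 0 < a12) (h21 : 0 < a21) (h22 : 0 < a22)
    (hε : 0 < ε) {t T : ℝ} (htT : t ≤ T) :
    supersolution a11 a12 a21 a22 ε t 0 ≤ bound a11 a12 a21 a22 T * ε ∧
      supersolution a11 a12 a21 a22 ε t 1 ≤ exp (-(a22 * t) / ε) + bound a11 a12 a21 a22 T * ε := by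
  have hexp : exp (rate a11 a12 a21 a22 * t) ≤ exp (rate a11 a12 a21 a22 * T) :=
    exp_le_exp.2 (mul_le_mul_of_nonneg_left htT (rate_pos h11 h12 h21 h22).le)
  have hA : 0 < a12 / a22 * ε := by positivity
  have hB : 0 < a12 * a21 / a22 ^ 2 * ε := by positivity
  have hAE := mul_pos hA (exp_pos (-(a22 * t) / ε))
  have hBF := mul_pos hB (exp_pos (rate a11 a12 a21 a22 * T))
  have hAF := mul_pos hA (exp_pos (rate a11 a12 a21 a22 * T))
  simp only [supersolution, bound, cons_val_zero, cons_val_one]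
  constructor <;> nlinarith [mul_le_mul_of_nonneg_left hexp hA.le,
    mul_le_mul_of_nonneg_left hexp hB.le]

end SlowFast

end

theorem stmt_1_general (T a11 a12 a21 a22 : ℝ)
    (h11 : 0 < a11) (h12 : 0 < a12) (h21 : 0 < a21) (h22 : 0 < a22) :
    ∃ C : ℝ, 0 < C ∧
      ∀ ε : ℝ, 0 < ε →
        ∀ x1 x2 : ℝ → ℝ,
          (∀ t ∈ Set.Icc (0:ℝ) T, DifferentiableAt ℝ x1 t) →
          (∀ t ∈ Set.Icc (0:ℝ) T, DifferentiableAt ℝ x2 t) →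
          (∀ t ∈ Set.Icc (0:ℝ) T, deriv x1 t ≤ a11 * x1 t + a12 * x2 t) →
          (∀ t ∈ Set.Icc (0:ℝ) T, deriv x2 t ≤ (a21 / ε) * x1 t - (a22 / ε) * x2 t) →
          x1 0 = 0 → x2 0 = 1 →
          (∀ t ∈ Set.Icc (0:ℝ) T, 0 ≤ x1 t) →
          (∀ s ∈ Set.Icc (0:ℝ) T, x1 s ≤ C * ε) ∧
          (∀ t ∈ Set.Icc (0:ℝ) T, x2 t ≤ Real.exp (-(a22 * t) / ε) + C * ε) := by
  refine ⟨SlowFast.bound a11 a12 a21 a22 T, SlowFast.bound_pos h12 h21 h22 T, ?_⟩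
  intro ε hε x1 x2 hdx1 hdx2 hx1' hx2' hx10 hx20 _
  have hx : ∀ t ∈ Icc 0 T, HasDerivAt (fun t => ![x1 t, x2 t]) ![deriv x1 t, deriv x2 t] t :=
    fun t ht => hasDerivAt_pi.2 (Fin.forall_fin_two.2
      ⟨(hdx1 t ht).hasDerivAt, (hdx2 t ht).hasDerivAt⟩)
  have hy := SlowFast.hasDerivAt_supersolution (a11 := a11) (a12 := a12) (a21 := a21)
    h22.ne' hε.ne'
  have hsystem : ∀ t ∈ Ico 0 T, ![deriv x1 t, deriv x2 t] ≤
      SlowFast.matrix a11 a12 a21 a22 ε *ᵥ ![x1 t, x2 t] := by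
    intro t ht
    rw [SlowFast.matrix_mulVec]
    exact Fin.forall_fin_two.2 ⟨hx1' t (Ico_subset_Icc_self ht), hx2' t (Ico_subset_Icc_self ht)⟩
  have hle := le_of_deriv_le_mulVec_of_mulVec_lt_deriv (SlowFast.matrix_nonneg_of_ne h12 h21 hε)
    (fun t ht => (hx t ht).continuousAt.continuousWithinAt)
    (fun t _ => (hy t).continuousAt.continuousWithinAt)
    (fun t ht => (hx t (Ico_subset_Icc_self ht)).hasDerivWithinAt)
    (fun t _ => (hy t).hasDerivWithinAt) hsystem
    (fun t _ => SlowFast.mulVec_supersolution_lt_deriv h11 h12 h21 h22 hε t)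
    (by simpa [hx10, hx20] using SlowFast.initial_le_supersolution h12 h21 hε)
  exact ⟨fun s hs => (hle s hs 0).trans (SlowFast.supersolution_le h11 h12 h21 h22 hε hs.2).1,
    fun t ht => (hle t ht 1).trans (SlowFast.supersolution_le h11 h12 h21 h22 hε ht.2).2⟩

theorem stmt_1 (T a11 a12 a21 a22 : ℝ) (hT : 0 < T)
    (h11 : 0 < a11) (h12 : 0 < a12) (h21 : 0 < a21) (h22 : 0 < a22) :
    ∃ C : ℝ, 0 < C ∧
      ∀ ε : ℝ, 0 < ε →
        ∀ x1 x2 : ℝ → ℝ,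
          (∀ t ∈ Set.Icc (0:ℝ) T, DifferentiableAt ℝ x1 t) →
          (∀ t ∈ Set.Icc (0:ℝ) T, DifferentiableAt ℝ x2 t) →
          (∀ t ∈ Set.Icc (0:ℝ) T, deriv x1 t ≤ a11 * x1 t + a12 * x2 t) →
          (∀ t ∈ Set.Icc (0:ℝ) T, deriv x2 t ≤ (a21 / ε) * x1 t - (a22 / ε) * x2 t) →
          x1 0 = 0 → x2 0 = 1 →
          (∀ t ∈ Set.Icc (0:ℝ) T, 0 ≤ x1 t) →
          (∀ s ∈ Set.Icc (0:ℝ) T, x1 s ≤ C * ε) ∧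
          (∀ t ∈ Set.Icc (0:ℝ) T, x2 t ≤ Real.exp (-(a22 * t) / ε) + C * ε) :=
  stmt_1_general T a11 a12 a21 a22 h11 h12 h21 h22
end

section
/- Let $x_1, x_2 : [0,T] \to \mathbb{R}$ satisfy $\dot{x}_1(t) \le a_1(1 + \epsilon^{-\gamma(t)}) x_1(t) + a_2 \epsilon^{\gamma(t)} x_2(t)$ and $\dot{x}_2(t) \le \frac{a_3}{\epsilon} x_1(t) - \frac{\lambda}{\epsilon} x_2(t)$, with $x_1(0) = 0$, $x_2(0) = 1$, $x_1(t) \ge 0$, where $0 < \epsilon < 1$, $a_1, a_2, a_3 \ge 0$, $\lambda > 0$, $t_1 = -\frac{2\epsilon \ln \epsilon}{\lambda}$, and $\gamma(t) = 1 - t/t_1$ for $0 \le t \le t_1$, $\gamma(t) = 0$ for $t_1 < t \le T$. Then there exists a constant $C > 0$ independent of $\epsilon$ such that $\max_{0 \le s \le T} x_1(s) \le C\epsilon^2$ and $x_2(t) \le e^{-\lambda t/\epsilon} + C\epsilon^2$ for all $t \in [0,T]$. -/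
/-!
Write `b = λ/(2ε)`. The choice of `t₁` makes the weight `ε^γ(t)` equal to `min (ε e^{bt}) 1`:
it grows like `ε e^{bt}` through the initial layer and is `1` afterwards.
The second equation is linear in `x₂`, so `x₂ ≤ e^{-2bt} + y`, where `y` solves
`y' = (a₃/ε) x₁ - 2b y`, `y(0) = 0` and is nonnegative. The Lyapunov function
`W = x₁ + a₂ q y`, with `q = (2/b) · ε e^{bt}/(1 + ε e^{bt})` of size `O(ε)`, absorbs the
coupling term `a₂ ε^γ y`, and satisfies `W' ≤ (α + (a₁/ε) e^{-bt}) W + a₂ ε e^{-bt}` for a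
constant `α`.
The coefficient integrates to `O(1)` and the forcing to `O(ε²)`, so Gronwall bounds `W ≥ x₁`
by `O(ε²)`; feeding this back into `y` gives the bound on `x₂`.
-/

open Set Real

theorem hasDerivAt_exp_neg_mul (k t : ℝ) :
    HasDerivAt (fun t => exp (-(k * t))) (-k * exp (-(k * t))) t := by
  simpa [mul_comm] using ((hasDerivAt_id t).const_mul k).neg.exp

theorem antitoneOn_mul_exp_neg_sub {a c : ℝ} {u u' g G H h : ℝ → ℝ}
    (hu : ContinuousOn u (Icc a c)) (hu' : ∀ t ∈ Ioo a c, HasDerivAt u (u' t) t)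
    (hG : ∀ t, HasDerivAt G (g t) t) (hH : ∀ t, HasDerivAt H (h t) t)
    (hle : ∀ t ∈ Ioo a c, (u' t - g t * u t) * exp (-G t) ≤ h t) :
    AntitoneOn (fun t => u t * exp (-G t) - H t) (Icc a c) := by
  have hGc : Continuous G := continuous_iff_continuousAt.2 fun t => (hG t).continuousAt
  have hHc : Continuous H := continuous_iff_continuousAt.2 fun t => (hH t).continuousAt
  refine antitoneOn_of_hasDerivWithinAt_nonpos (convex_Icc a c)
    (f' := fun t => (u' t - g t * u t) * exp (-G t) - h t)
    ((hu.mul hGc.neg.rexp.continuousOn).sub hHc.continuousOn) ?_ ?_ <;>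
  intro t ht <;> rw [interior_Icc] at ht
  · refine (((hu' t ht).mul (hG t).neg.exp).sub (hH t)).hasDerivWithinAt.congr_deriv ?_
    simp only [Pi.neg_apply]; ring
  · exact sub_nonpos.2 (hle t ht)

theorem nonpos_of_deriv_le_neg_mul {a c k : ℝ} {u u' : ℝ → ℝ}
    (hu : ContinuousOn u (Icc a c)) (hu' : ∀ t ∈ Ioo a c, HasDerivAt u (u' t) t)
    (hle : ∀ t ∈ Ioo a c, u' t ≤ -(k * u t)) (ha : u a ≤ 0) :
    ∀ t ∈ Icc a c, u t ≤ 0 := by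
  intro t ht
  have hG : ∀ t, HasDerivAt (fun t => -k * t) (-k) t := fun t => by
    simpa using (hasDerivAt_id t).const_mul (-k)
  have hanti := antitoneOn_mul_exp_neg_sub hu hu' hG (fun t => hasDerivAt_const t 0)
    (fun t ht => mul_nonpos_of_nonpos_of_nonneg (by linarith [hle t ht]) (exp_pos _).le)
    (left_mem_Icc.2 (ht.1.trans ht.2)) ht ht.1
  simp only [sub_zero] at hanti
  nlinarith [exp_pos (-(-k * t)), exp_pos (-(-k * a))]

theorem le_mul_exp_of_deriv_le_decaying {T α β b c : ℝ} {u u' : ℝ → ℝ}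
    (hα : 0 ≤ α) (hβ : 0 ≤ β) (hb : 0 < b) (hc : 0 ≤ c)
    (hu : ContinuousOn u (Icc 0 T)) (hu' : ∀ t ∈ Ioo 0 T, HasDerivAt u (u' t) t)
    (hle : ∀ t ∈ Ioo 0 T,
      u' t ≤ (α + β * b * exp (-(b * t))) * u t + c * exp (-(b * t)))
    (hu0 : 0 ≤ u 0) :
    ∀ t ∈ Icc 0 T, u t ≤ (u 0 + c / b) * exp (α * T + β) := by
  set G : ℝ → ℝ := fun t => α * t + β * (1 - exp (-(b * t)))
  have hG : ∀ t, HasDerivAt G (α + β * b * exp (-(b * t))) t := fun t => by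
    refine (((hasDerivAt_id t).const_mul α).add
      ((hasDerivAt_exp_neg_mul b t).const_sub 1 |>.const_mul β)).congr_deriv ?_
    ring
  have hG_nonneg : ∀ t, 0 ≤ t → 0 ≤ G t := fun t ht => by
    have : exp (-(b * t)) ≤ 1 := exp_le_one_iff.2 (by nlinarith)
    have : 0 ≤ β * (1 - exp (-(b * t))) := mul_nonneg hβ (by linarith)
    simp only [G]; nlinarith
  have hG_le : ∀ t ∈ Icc 0 T, G t ≤ α * T + β := fun t ht => by
    have := mul_le_mul_of_nonneg_left ht.2 hα
    simp only [G]; nlinarith [exp_pos (-(b * t))]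
  have hH : ∀ t, HasDerivAt (fun t => -(c / b) * exp (-(b * t))) (c * exp (-(b * t))) t :=
    fun t => ((hasDerivAt_exp_neg_mul b t).const_mul _).congr_deriv (by field_simp)
  -- `e^{-G} ≤ 1` lets the forcing term be integrated without the integrating factor
  have hanti := antitoneOn_mul_exp_neg_sub hu hu' hG hH fun t ht => by
    have h1 : exp (-G t) ≤ 1 := exp_le_one_iff.2 (by linarith [hG_nonneg t ht.1.le])
    have h2 := mul_le_mul_of_nonneg_right
      (sub_le_iff_le_add.2 ((hle t ht).trans_eq (add_comm _ _))) (exp_pos (-G t)).le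
    nlinarith [mul_le_mul_of_nonneg_left h1 (mul_nonneg hc (exp_pos (-(b * t))).le)]
  intro t ht
  have h0t := hanti (left_mem_Icc.2 (ht.1.trans ht.2)) ht ht.1
  have hG0 : G 0 = 0 := by simp [G]
  simp only [hG0, neg_zero, exp_zero, mul_zero, mul_one] at h0t
  have hut : u t * exp (-G t) ≤ u 0 + c / b := by
    nlinarith [exp_pos (-(b * t)), div_nonneg hc hb.le]
  calc u t = u t * exp (-G t) * exp (G t) := by rw [mul_assoc, ← exp_add]; simp
    _ ≤ (u 0 + c / b) * exp (G t) := mul_le_mul_of_nonneg_right hut (exp_pos _).le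
    _ ≤ (u 0 + c / b) * exp (α * T + β) :=
        mul_le_mul_of_nonneg_left (exp_le_exp.2 (hG_le t ht)) (by positivity)

/-- `expConv k f t = ∫₀ᵗ e^{-k(t-s)} f s ds`, the solution of `y' = f - k y`, `y 0 = 0`. -/
noncomputable def expConv (k : ℝ) (f : ℝ → ℝ) (t : ℝ) : ℝ :=
  exp (-(k * t)) * ∫ s in (0 : ℝ)..t, exp (k * s) * f s

section expConv

variable {T k : ℝ} {f : ℝ → ℝ}

@[simp]
theorem expConv_zero : expConv k f 0 = 0 := by
  simp [expConv]

theorem expConv_nonneg {t : ℝ} (ht : 0 ≤ t) (hf : ∀ s ∈ Icc 0 t, 0 ≤ f s) :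
    0 ≤ expConv k f t :=
  mul_nonneg (exp_pos _).le <| intervalIntegral.integral_nonneg ht fun s hs =>
    mul_nonneg (exp_pos _).le (hf s hs)

theorem continuousOn_expConv (hf : ContinuousOn f (Icc 0 T)) :
    ContinuousOn (expConv k f) (Icc 0 T) := by
  intro t ht
  have hint : ContinuousOn (fun s => exp (k * s) * f s) (uIcc 0 T) := by
    rw [uIcc_of_le (ht.1.trans ht.2)]
    exact (continuous_exp.comp (continuous_const_mul k)).continuousOn.mul hf
  refine ((continuous_exp.comp (continuous_const_mul k).neg).continuousWithinAt).mul ?_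
  exact (intervalIntegral.continuousOn_primitive_interval hint.integrableOn_Icc t
    (Icc_subset_uIcc ht)).mono Icc_subset_uIcc

theorem hasDerivAt_expConv (hf : ContinuousOn f (Icc 0 T)) {t : ℝ} (ht : t ∈ Ioo 0 T) :
    HasDerivAt (expConv k f) (f t - k * expConv k f t) t := by
  have hint : ContinuousOn (fun s => exp (k * s) * f s) (Icc 0 T) :=
    (continuous_exp.comp (continuous_const_mul k)).continuousOn.mul hf
  have hsub : uIcc 0 t ⊆ Icc 0 T := by
    rw [uIcc_of_le ht.1.le]; exact Icc_subset_Icc_right ht.2.le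
  have hprim : HasDerivAt (fun t => ∫ s in (0 : ℝ)..t, exp (k * s) * f s)
      (exp (k * t) * f t) t :=
    intervalIntegral.integral_hasDerivAt_right (hint.mono hsub).intervalIntegrable
      ((hint.mono Ioo_subset_Icc_self).stronglyMeasurableAtFilter isOpen_Ioo t ht)
      (hint.continuousAt (Icc_mem_nhds ht.1 ht.2))
  refine ((hasDerivAt_exp_neg_mul k t).mul hprim).congr_deriv ?_
  rw [expConv, ← mul_assoc, ← exp_add]
  simp only [neg_add_cancel, exp_zero]
  ring

theorem le_exp_neg_add_expConv {x x' : ℝ → ℝ} (hf : ContinuousOn f (Icc 0 T))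
    (hx : ContinuousOn x (Icc 0 T)) (hx' : ∀ t ∈ Ioo 0 T, HasDerivAt x (x' t) t)
    (hle : ∀ t ∈ Ioo 0 T, x' t ≤ f t - k * x t) (hx0 : x 0 ≤ 1) :
    ∀ t ∈ Icc 0 T, x t ≤ exp (-(k * t)) + expConv k f t := by
  have key := nonpos_of_deriv_le_neg_mul (k := k)
    (u := fun t => x t - exp (-(k * t)) - expConv k f t)
    ((hx.sub (continuous_exp.comp (continuous_const_mul k).neg).continuousOn).sub
      (continuousOn_expConv hf))
    (fun t ht => ((hx' t ht).sub (hasDerivAt_exp_neg_mul k t)).sub (hasDerivAt_expConv hf ht))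
    (fun t ht => by linarith [hle t ht]) (by simpa using hx0)
  exact fun t ht => by linarith [key t ht]

theorem expConv_le_div {M : ℝ} (hk : 0 < k) (hM : 0 ≤ M) (hf : ContinuousOn f (Icc 0 T))
    (hfM : ∀ t ∈ Icc 0 T, f t ≤ M) : ∀ t ∈ Icc 0 T, expConv k f t ≤ M / k := by
  have key := nonpos_of_deriv_le_neg_mul (k := k) (u := fun t => expConv k f t - M / k)
    ((continuousOn_expConv hf).sub continuousOn_const)
    (fun t ht => (hasDerivAt_expConv hf ht).sub_const (M / k))
    (fun t ht => by
      have := hfM t (Ioo_subset_Icc_self ht)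
      rw [mul_sub, mul_div_cancel₀ M hk.ne']; linarith)
    (by simp only [expConv_zero, zero_sub, neg_nonpos]; positivity)
  exact fun t ht => by linarith [key t ht]

end expConv

theorem rpow_eq_min_of_layer {ε lam T : ℝ} (hε : 0 < ε) (hε1 : ε < 1) (hlam : 0 < lam)
    {γ : ℝ → ℝ}
    (hγ1 : ∀ t, 0 ≤ t → t ≤ -(2 * ε * log ε) / lam →
      γ t = 1 - t / (-(2 * ε * log ε) / lam))
    (hγ2 : ∀ t, -(2 * ε * log ε) / lam < t → t ≤ T → γ t = 0)
    {t : ℝ} (ht : t ∈ Icc 0 T) :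
    ε ^ γ t = min (ε * exp (lam / (2 * ε) * t)) 1 := by
  have hlog : log ε < 0 := log_neg hε hε1
  have hexp : ε * exp (lam / (2 * ε) * t) = exp (log ε + lam / (2 * ε) * t) := by
    rw [exp_add, exp_log hε]
  have hlayer : t ≤ -(2 * ε * log ε) / lam ↔ log ε + lam / (2 * ε) * t ≤ 0 := by
    have : log ε + lam / (2 * ε) * t = (lam * t + 2 * ε * log ε) / (2 * ε) := by
      field_simp; ring
    rw [this, le_div_iff₀ hlam, div_le_iff₀ (by positivity)]
    constructor <;> intro h <;> linarith
  rcases le_or_gt t (-(2 * ε * log ε) / lam) with h | h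
  · rw [hγ1 t ht.1 h, min_eq_left (by rw [hexp]; exact exp_le_one_iff.2 (hlayer.1 h)), hexp,
      rpow_def_of_pos hε]
    congr 1
    field_simp [hlog.ne]
    ring
  · have : 0 ≤ log ε + lam / (2 * ε) * t := (not_le.1 (mt hlayer.2 h.not_ge)).le
    rw [hγ2 t h ht.2, rpow_zero, min_eq_right (by rw [hexp]; exact one_le_exp_iff.2 this)]

theorem inv_min_one_le {P : ℝ} (hP : 0 < P) : (min P 1)⁻¹ ≤ 1 + P⁻¹ := by
  rcases min_cases P 1 with ⟨h, -⟩ | ⟨h, -⟩ <;> rw [h]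
  · linarith
  · simp [inv_nonneg.2 hP.le]

theorem min_one_add_le {P : ℝ} (hP : 0 < P) :
    min P 1 + 2 * P / (1 + P) ^ 2 ≤ 4 * P / (1 + P) := by
  rw [← sub_nonneg]
  rcases min_cases P 1 with ⟨h, hP1⟩ | ⟨h, hP1⟩ <;> rw [h]
  · have : 4 * P / (1 + P) - (P + 2 * P / (1 + P) ^ 2) =
        P * (1 + P * (2 - P)) / (1 + P) ^ 2 := by
      field_simp; ring
    rw [this]
    exact div_nonneg (mul_nonneg hP.le (by nlinarith)) (sq_nonneg _)
  · have : 4 * P / (1 + P) - (1 + 2 * P / (1 + P) ^ 2) = (3 * P ^ 2 - 1) / (1 + P) ^ 2 := by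
      field_simp; ring
    rw [this]
    exact div_nonneg (by nlinarith) (sq_nonneg _)

theorem hasDerivAt_logistic (ε b t : ℝ) (hε : 0 ≤ ε) :
    HasDerivAt (fun t => ε * exp (b * t) / (1 + ε * exp (b * t)))
      (b * (ε * exp (b * t)) / (1 + ε * exp (b * t)) ^ 2) t := by
  have hP : HasDerivAt (fun t => ε * exp (b * t)) (b * (ε * exp (b * t))) t := by
    simpa [mul_comm, mul_left_comm] using (((hasDerivAt_id t).const_mul b).exp).const_mul ε
  refine (hP.div (hP.const_add 1) (by positivity)).congr_deriv ?_
  field_simp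
  ring

/-- `W' ≤ (α + (a₁/ε) E) W + a₂ ε E` at a single time, for `W = x₁ + a₂ q y`, where `P = ε e^{bt}`,
`E = e^{-bt}`, `min P 1 = ε^γ` and `q = (2/b) P/(1+P)`. -/
theorem lyapunov_deriv_le {a1 a2 a3 lam b ε P E x1 x2 y d1 : ℝ}
    (ha1 : 0 ≤ a1) (ha2 : 0 ≤ a2) (ha3 : 0 ≤ a3) (hε : 0 < ε) (hb0 : 0 < b)
    (hb : lam = 2 * b * ε) (hP : 0 < P) (hPE : P * E = ε) (hx1 : 0 ≤ x1) (hy : 0 ≤ y)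
    (hd1 : d1 ≤ a1 * (1 + (min P 1)⁻¹) * x1 + a2 * min P 1 * x2) (hx2 : x2 ≤ E ^ 2 + y) :
    d1 + a2 * (2 * P / (1 + P) ^ 2 * y + 2 / b * (P / (1 + P)) * (a3 / ε * x1 - lam / ε * y))
      ≤ (2 * a1 + 4 * a2 * a3 / lam + 2 * a1 / lam * b * E) *
          (x1 + a2 * (2 / b * (P / (1 + P)) * y)) + a2 * ε * E := by
  have hE : 0 < E := pos_of_mul_pos_right (hPE ▸ hε) hP.le
  set m := min P 1
  set q := 2 / b * (P / (1 + P))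
  have hq : 0 ≤ q := by positivity
  have hforce : a2 * m * x2 ≤ a2 * ε * E + a2 * m * y := by
    have : m * E ^ 2 ≤ ε * E := by
      rw [← hPE]; nlinarith [mul_le_mul_of_nonneg_right (min_le_left P 1) (sq_nonneg E)]
    nlinarith [mul_le_mul_of_nonneg_left hx2 (mul_nonneg ha2 (lt_min hP one_pos).le),
      mul_le_mul_of_nonneg_left this ha2]
  have hx1_coef : a1 * (1 + m⁻¹) + a2 * q * (a3 / ε)
      ≤ 2 * a1 + 4 * a2 * a3 / lam + 2 * a1 / lam * b * E := by
    have hPinv : P⁻¹ = 2 / lam * b * E := by rw [hb, ← hPE]; field_simp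
    have hq_le : q ≤ 2 / b :=
      mul_le_of_le_one_right (by positivity) ((div_le_one (by positivity)).2 (by linarith))
    calc a1 * (1 + m⁻¹) + a2 * q * (a3 / ε)
        ≤ a1 * (1 + (1 + P⁻¹)) + a2 * (2 / b) * (a3 / ε) := by
          gcongr; exact inv_min_one_le hP
      _ = _ := by rw [hPinv, hb]; field_simp; ring
  have hy_coef : m + 2 * P / (1 + P) ^ 2 - lam / ε * q ≤ 0 := by
    have : lam / ε * q = 4 * P / (1 + P) := by simp only [q, hb]; field_simp; ring
    linarith [min_one_add_le hP]
  have hg : 0 ≤ 2 * a1 + 4 * a2 * a3 / lam + 2 * a1 / lam * b * E := by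
    have : 0 < lam := by rw [hb]; positivity
    positivity
  calc _ ≤ (a1 * (1 + m⁻¹) + a2 * q * (a3 / ε)) * x1 + a2 * ε * E
        + a2 * y * (m + 2 * P / (1 + P) ^ 2 - lam / ε * q) := by
        linarith
    _ ≤ (2 * a1 + 4 * a2 * a3 / lam + 2 * a1 / lam * b * E) * x1 + a2 * ε * E := by
        linarith [mul_le_mul_of_nonneg_right hx1_coef hx1,
          mul_nonpos_of_nonneg_of_nonpos (mul_nonneg ha2 hy) hy_coef]
    _ ≤ _ := by gcongr; nlinarith [mul_nonneg ha2 (mul_nonneg hq hy)]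

theorem le_mul_sq_of_two_scale {T ε lam a1 a2 a3 : ℝ} (hε : 0 < ε) (hlam : 0 < lam)
    (ha1 : 0 ≤ a1) (ha2 : 0 ≤ a2) (ha3 : 0 ≤ a3) {x1 x2 x1' x2' : ℝ → ℝ}
    (hx1 : ContinuousOn x1 (Icc 0 T)) (hx2 : ContinuousOn x2 (Icc 0 T))
    (hx1' : ∀ t ∈ Ioo 0 T, HasDerivAt x1 (x1' t) t)
    (hx2' : ∀ t ∈ Ioo 0 T, HasDerivAt x2 (x2' t) t)
    (hle1 : ∀ t ∈ Ioo 0 T,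
      x1' t ≤ a1 * (1 + (min (ε * exp (lam / (2 * ε) * t)) 1)⁻¹) * x1 t
        + a2 * min (ε * exp (lam / (2 * ε) * t)) 1 * x2 t)
    (hle2 : ∀ t ∈ Ioo 0 T, x2' t ≤ a3 / ε * x1 t - lam / ε * x2 t)
    (hx1_zero : x1 0 = 0) (hx2_zero : x2 0 ≤ 1) (hx1_nonneg : ∀ t ∈ Icc 0 T, 0 ≤ x1 t) :
    ∀ t ∈ Icc 0 T,
      x1 t ≤ 2 * a2 / lam * exp ((2 * a1 + 4 * a2 * a3 / lam) * T + 2 * a1 / lam) * ε ^ 2 := by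
  set b := lam / (2 * ε)
  have hb : 0 < b := by positivity
  have hlam_eq : lam = 2 * b * ε := by simp only [b]; field_simp
  set P : ℝ → ℝ := fun t => ε * exp (b * t)
  set q : ℝ → ℝ := fun t => 2 / b * (P t / (1 + P t))
  set y := expConv (lam / ε) fun s => a3 / ε * x1 s
  have hf : ContinuousOn (fun s => a3 / ε * x1 s) (Icc 0 T) := continuousOn_const.mul hx1
  have hy_nonneg : ∀ t ∈ Icc 0 T, 0 ≤ y t := fun t ht => expConv_nonneg ht.1 fun s hs =>
    mul_nonneg (by positivity) (hx1_nonneg s ⟨hs.1, hs.2.trans ht.2⟩)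
  have hq : ∀ t, HasDerivAt q (2 * P t / (1 + P t) ^ 2) t := fun t =>
    ((hasDerivAt_logistic ε b t hε.le).const_mul (2 / b)).congr_deriv
      (by simp only [P]; field_simp)
  have hx2_le : ∀ t ∈ Icc 0 T, x2 t ≤ exp (-(b * t)) ^ 2 + y t := fun t ht => by
    have h := le_exp_neg_add_expConv hf hx2 hx2' hle2 hx2_zero t ht
    rwa [show exp (-(lam / ε * t)) = exp (-(b * t)) ^ 2 by
      rw [sq, ← exp_add, hlam_eq]; field_simp; ring_nf] at h
  have hW := le_mul_exp_of_deriv_le_decaying (u := fun t => x1 t + a2 * (q t * y t))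
    (α := 2 * a1 + 4 * a2 * a3 / lam) (β := 2 * a1 / lam) (c := a2 * ε) (by positivity)
    (by positivity) hb (by positivity)
    (hx1.add (continuousOn_const.mul
      ((continuous_iff_continuousAt.2 fun t => (hq t).continuousAt).continuousOn.mul
        (continuousOn_expConv hf))))
    (fun t ht => (hx1' t ht).add (((hq t).mul (hasDerivAt_expConv hf ht)).const_mul a2))
    (fun t ht => lyapunov_deriv_le ha1 ha2 ha3 hε hb hlam_eq (by positivity)
      (by rw [mul_assoc, ← exp_add]; simp) (hx1_nonneg t (Ioo_subset_Icc_self ht))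
      (hy_nonneg t (Ioo_subset_Icc_self ht)) (hle1 t ht) (hx2_le t (Ioo_subset_Icc_self ht)))
    (by simp [hx1_zero, y])
  intro t ht
  have hq_nonneg : 0 ≤ q t := by simp only [q, P]; positivity
  calc x1 t ≤ x1 t + a2 * (q t * y t) :=
        le_add_of_nonneg_right (mul_nonneg ha2 (mul_nonneg hq_nonneg (hy_nonneg t ht)))
    _ ≤ _ := hW t ht
    _ = _ := by simp only [hx1_zero, y, expConv_zero]; rw [hlam_eq]; field_simp; ring

theorem stmt_6_general (T a1 a2 a3 lam : ℝ)
    (h1 : 0 ≤ a1) (h2 : 0 ≤ a2) (h3 : 0 ≤ a3) (hlam : 0 < lam) :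
    ∃ C : ℝ, 0 < C ∧
      ∀ ε : ℝ, 0 < ε → ε < 1 →
        ∀ γ : ℝ → ℝ,
          (∀ t, 0 ≤ t → t ≤ -(2 * ε * Real.log ε) / lam →
            γ t = 1 - t / (-(2 * ε * Real.log ε) / lam)) →
          (∀ t, -(2 * ε * Real.log ε) / lam < t → t ≤ T → γ t = 0) →
          ∀ x1 x2 : ℝ → ℝ,
            (∀ t ∈ Set.Icc (0:ℝ) T, DifferentiableAt ℝ x1 t) →
            (∀ t ∈ Set.Icc (0:ℝ) T, DifferentiableAt ℝ x2 t) →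
            (∀ t ∈ Set.Icc (0:ℝ) T,
              deriv x1 t ≤ a1 * (1 + ε ^ (-(γ t))) * x1 t + a2 * ε ^ (γ t) * x2 t) →
            (∀ t ∈ Set.Icc (0:ℝ) T,
              deriv x2 t ≤ (a3 / ε) * x1 t - (lam / ε) * x2 t) →
            x1 0 = 0 → x2 0 = 1 →
            (∀ t ∈ Set.Icc (0:ℝ) T, 0 ≤ x1 t) →
            (∀ s ∈ Set.Icc (0:ℝ) T, x1 s ≤ C * ε ^ 2) ∧
            (∀ t ∈ Set.Icc (0:ℝ) T, x2 t ≤ Real.exp (-(lam * t) / ε) + C * ε ^ 2) := by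
  set C₁ := 2 * a2 / lam * exp ((2 * a1 + 4 * a2 * a3 / lam) * T + 2 * a1 / lam)
  have hC₁ : 0 ≤ C₁ := by positivity
  refine ⟨C₁ * (1 + a3 / lam) + 1, by positivity, ?_⟩
  intro ε hε hε1 γ hγ1 hγ2 x1 x2 hd1 hd2 hode1 hode2 hx10 hx20 hx1_nonneg
  have hx1c : ContinuousOn x1 (Icc 0 T) := fun t ht =>
    (hd1 t ht).continuousAt.continuousWithinAt
  have hx2c : ContinuousOn x2 (Icc 0 T) := fun t ht =>
    (hd2 t ht).continuousAt.continuousWithinAt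
  have hx1' := fun t (ht : t ∈ Ioo 0 T) => (hd1 t (Ioo_subset_Icc_self ht)).hasDerivAt
  have hx2' := fun t (ht : t ∈ Ioo 0 T) => (hd2 t (Ioo_subset_Icc_self ht)).hasDerivAt
  have hle2 := fun t (ht : t ∈ Ioo 0 T) => hode2 t (Ioo_subset_Icc_self ht)
  have hx1_le := le_mul_sq_of_two_scale hε hlam h1 h2 h3 hx1c hx2c hx1' hx2'
    (fun t ht => by
      have := hode1 t (Ioo_subset_Icc_self ht)
      rwa [rpow_neg hε.le,
        rpow_eq_min_of_layer hε hε1 hlam hγ1 hγ2 (Ioo_subset_Icc_self ht)] at this)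
    hle2 hx10 hx20.le hx1_nonneg
  have hf : ContinuousOn (fun s => a3 / ε * x1 s) (Icc 0 T) := continuousOn_const.mul hx1c
  have hx2_le := le_exp_neg_add_expConv hf hx2c hx2' hle2 hx20.le
  have hy_le := expConv_le_div (k := lam / ε) (by positivity) (by positivity) hf
    fun t ht => mul_le_mul_of_nonneg_left (hx1_le t ht) (by positivity)
  have hC₁_le : C₁ ≤ C₁ * (1 + a3 / lam) + 1 := by nlinarith [div_nonneg h3 hlam.le]
  have hC₃_le : a3 / lam * C₁ ≤ C₁ * (1 + a3 / lam) + 1 := by nlinarith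
  refine ⟨fun s hs => (hx1_le s hs).trans (by gcongr), fun t ht => (hx2_le t ht).trans ?_⟩
  have hy_le' : a3 / ε * (C₁ * ε ^ 2) / (lam / ε) = a3 / lam * C₁ * ε ^ 2 := by field_simp
  rw [neg_div, mul_div_right_comm]
  linarith [hy_le t ht, mul_le_mul_of_nonneg_right hC₃_le (sq_nonneg ε)]

theorem stmt_6 (T a1 a2 a3 lam : ℝ) (hT : 0 < T)
    (h1 : 0 ≤ a1) (h2 : 0 ≤ a2) (h3 : 0 ≤ a3) (hlam : 0 < lam) :
    ∃ C : ℝ, 0 < C ∧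
      ∀ ε : ℝ, 0 < ε → ε < 1 →
        ∀ γ : ℝ → ℝ,
          (∀ t, 0 ≤ t → t ≤ -(2 * ε * Real.log ε) / lam →
            γ t = 1 - t / (-(2 * ε * Real.log ε) / lam)) →
          (∀ t, -(2 * ε * Real.log ε) / lam < t → t ≤ T → γ t = 0) →
          ∀ x1 x2 : ℝ → ℝ,
            (∀ t ∈ Set.Icc (0:ℝ) T, DifferentiableAt ℝ x1 t) →
            (∀ t ∈ Set.Icc (0:ℝ) T, DifferentiableAt ℝ x2 t) →
            (∀ t ∈ Set.Icc (0:ℝ) T,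
              deriv x1 t ≤ a1 * (1 + ε ^ (-(γ t))) * x1 t + a2 * ε ^ (γ t) * x2 t) →
            (∀ t ∈ Set.Icc (0:ℝ) T,
              deriv x2 t ≤ (a3 / ε) * x1 t - (lam / ε) * x2 t) →
            x1 0 = 0 → x2 0 = 1 →
            (∀ t ∈ Set.Icc (0:ℝ) T, 0 ≤ x1 t) →
            (∀ s ∈ Set.Icc (0:ℝ) T, x1 s ≤ C * ε ^ 2) ∧
            (∀ t ∈ Set.Icc (0:ℝ) T, x2 t ≤ Real.exp (-(lam * t) / ε) + C * ε ^ 2) :=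
  stmt_6_general T a1 a2 a3 lam h1 h2 h3 hlam
end
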